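/- Let A ∈ ℝ^{n×n}, B ∈ ℝ^{n×m}, and let K^{i-1}, K^i ∈ ℝ^{m×n} with Φ_{i-1} = Φ(K^{i-1}), Φ_i = Φ(K^i) defined by Φ(K) = [[A,B],[-KA,-KB]], and Ψ_i = [[0,0],[(K^i-K^{i-1})A, (K^i-K^{i-1})B]]. Suppose Θ^i and Θ^{i+1} are symmetric and satisfy Θ^i = Q̄ + Φ_{i-1}ᵀ Θ^i Φ_{i-1} and Θ^{i+1} = Q̄ + Φ_iᵀ Θ^{i+1} Φ_i, where Θ^i is partitioned as [[Θ_xx^i, (Θ_ux^i)ᵀ],[Θ_ux^i, Θ_uu^i]] with Θ_uu^i invertible and K^i = (Θ_uu^i)⁻¹ Θ_ux^i. Then Θ^i - Θ^{i+1} = Φ_iᵀ (Θ^i - Θ^{i+1}) Φ_i + Ψ_iᵀ Θ^i Ψ_i. -/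

import Mathlib

/-!
Write `Φ(K) = [[A, B], [-KA, -KB]]`, so that `Φ(K') = Φ(K) + Ψ` with `Ψ = [[0, 0], [(K - K')A, (K - K')B]]`.
Expanding the Lyapunov equation of `Θ` along this splitting and subtracting that of `Θ'` gives
the identity up to the cross terms `Φᵀ Θ Ψ` and its transpose. These vanish because the greedy
gain `K = Θ_uu⁻¹ Θ_ux` makes the right block `Θ_uxᵀ - Kᵀ Θ_uu` of `[I, -Kᵀ] Θ` vanish, while
`Ψ` is supported on the lower block row.
-/

open Matrix

namespace Matrix

variable {R : Type*} [CommRing R] {n m : Type*} [Fintype n]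

theorem fromBlocks_neg_mul_eq_add_fromBlocks_zero_zero (A : Matrix n n R) (B : Matrix n m R)
    (K K' : Matrix m n R) :
    fromBlocks A B (-(K' * A)) (-(K' * B)) =
      fromBlocks A B (-(K * A)) (-(K * B)) + fromBlocks 0 0 ((K - K') * A) ((K - K') * B) := by
  rw [fromBlocks_add, add_zero, add_zero, Matrix.sub_mul, Matrix.sub_mul]
  congr 1 <;> abel

theorem transpose_fromBlocks_neg_mul_mul_fromBlocks_zero_zero [Fintype m] (A : Matrix n n R)
    (B : Matrix n m R) (K : Matrix m n R) (P : Matrix n n R) (U : Matrix n m R)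
    (V : Matrix m n R) (S : Matrix m m R) (C : Matrix m n R) (D : Matrix m m R)
    (hU : U = Kᵀ * S) :
    (fromBlocks A B (-(K * A)) (-(K * B)))ᵀ * fromBlocks P U V S * fromBlocks 0 0 C D = 0 := by
  simp only [fromBlocks_transpose, fromBlocks_multiply, transpose_neg, transpose_mul, hU]
  simp [Matrix.mul_assoc]

theorem sub_eq_transpose_mul_sub_mul_add_of_lyapunov {Q Θ Θ' Φ Ψ : Matrix n n R}
    (hΘ : Θ.IsSymm) (horth : Φᵀ * Θ * Ψ = 0)
    (hlyap : Θ = Q + (Φ + Ψ)ᵀ * Θ * (Φ + Ψ)) (hlyap' : Θ' = Q + Φᵀ * Θ' * Φ) :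
    Θ - Θ' = Φᵀ * (Θ - Θ') * Φ + Ψᵀ * Θ * Ψ := by
  have horth' : Ψᵀ * Θ * Φ = 0 := by
    simpa [transpose_mul, Matrix.mul_assoc, hΘ.eq] using congrArg transpose horth
  have hexpand : (Φ + Ψ)ᵀ * Θ * (Φ + Ψ) = Φᵀ * Θ * Φ + Ψᵀ * Θ * Ψ := by
    simp only [transpose_add, Matrix.add_mul, Matrix.mul_add, horth, horth']
    abel
  calc Θ - Θ' = (Q + (Φ + Ψ)ᵀ * Θ * (Φ + Ψ)) - (Q + Φᵀ * Θ' * Φ) := by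
        rw [← hlyap, ← hlyap']
    _ = Φᵀ * (Θ - Θ') * Φ + Ψᵀ * Θ * Ψ := by
        rw [hexpand, Matrix.mul_sub, Matrix.sub_mul]
        abel

end Matrix

theorem stmt8_general {n m : ℕ}
    (A : Matrix (Fin n) (Fin n) ℝ) (B : Matrix (Fin n) (Fin m) ℝ)
    (Kim1 Ki : Matrix (Fin m) (Fin n) ℝ)
    (Q : Matrix (Fin n ⊕ Fin m) (Fin n ⊕ Fin m) ℝ)
    (Θxx : Matrix (Fin n) (Fin n) ℝ) (Θux : Matrix (Fin m) (Fin n) ℝ)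
    (Θuu : Matrix (Fin m) (Fin m) ℝ) (huu : IsUnit Θuu)
    (Θi Θi1 : Matrix (Fin n ⊕ Fin m) (Fin n ⊕ Fin m) ℝ)
    (hΘi : Θi = Matrix.fromBlocks Θxx Θuxᵀ Θux Θuu)
    (hsymi : Θi.IsSymm)
    (hKi : Ki = Θuu⁻¹ * Θux)
    (hlyapi : Θi = Q + (Matrix.fromBlocks A B (-(Kim1 * A)) (-(Kim1 * B)))ᵀ * Θi *
        Matrix.fromBlocks A B (-(Kim1 * A)) (-(Kim1 * B)))
    (hlyapi1 : Θi1 = Q + (Matrix.fromBlocks A B (-(Ki * A)) (-(Ki * B)))ᵀ * Θi1 *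
        Matrix.fromBlocks A B (-(Ki * A)) (-(Ki * B))) :
    Θi - Θi1 = (Matrix.fromBlocks A B (-(Ki * A)) (-(Ki * B)))ᵀ * (Θi - Θi1) *
        Matrix.fromBlocks A B (-(Ki * A)) (-(Ki * B)) +
      (Matrix.fromBlocks 0 0 ((Ki - Kim1) * A) ((Ki - Kim1) * B))ᵀ * Θi *
        Matrix.fromBlocks 0 0 ((Ki - Kim1) * A) ((Ki - Kim1) * B) := by
  have hΘuu : Θuu.IsSymm := by
    rw [hΘi] at hsymi
    exact (isSymm_fromBlocks_iff.mp hsymi).2.2.2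
  have hΘux : Θuxᵀ = Kiᵀ * Θuu := by
    have hgain : Θux = Θuu * Ki := by
      rw [hKi, mul_nonsing_inv_cancel_left Θuu _ ((isUnit_iff_isUnit_det Θuu).mp huu)]
    rw [hgain, transpose_mul, hΘuu.eq]
  refine sub_eq_transpose_mul_sub_mul_add_of_lyapunov hsymi ?_ ?_ hlyapi1
  · rw [hΘi]
    exact transpose_fromBlocks_neg_mul_mul_fromBlocks_zero_zero A B Ki Θxx _ _ _ _ _ hΘux
  · rwa [← fromBlocks_neg_mul_eq_add_fromBlocks_zero_zero]

/-- Difference identity for consecutive Q-learning iterates: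
`Θⁱ - Θⁱ⁺¹ = Φᵢᵀ (Θⁱ - Θⁱ⁺¹) Φᵢ + Ψᵢᵀ Θⁱ Ψᵢ`. -/
theorem stmt8 {n m : ℕ}
    (A : Matrix (Fin n) (Fin n) ℝ) (B : Matrix (Fin n) (Fin m) ℝ)
    (Kim1 Ki : Matrix (Fin m) (Fin n) ℝ)
    (Q : Matrix (Fin n ⊕ Fin m) (Fin n ⊕ Fin m) ℝ) (hQ : Q.IsSymm)
    (Θxx : Matrix (Fin n) (Fin n) ℝ) (Θux : Matrix (Fin m) (Fin n) ℝ)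
    (Θuu : Matrix (Fin m) (Fin m) ℝ) (huu : IsUnit Θuu)
    (Θi Θi1 : Matrix (Fin n ⊕ Fin m) (Fin n ⊕ Fin m) ℝ)
    (hΘi : Θi = Matrix.fromBlocks Θxx Θuxᵀ Θux Θuu)
    (hsymi : Θi.IsSymm) (hsymi1 : Θi1.IsSymm)
    (hKi : Ki = Θuu⁻¹ * Θux)
    (hlyapi : Θi = Q + (Matrix.fromBlocks A B (-(Kim1 * A)) (-(Kim1 * B)))ᵀ * Θi *
        Matrix.fromBlocks A B (-(Kim1 * A)) (-(Kim1 * B)))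
    (hlyapi1 : Θi1 = Q + (Matrix.fromBlocks A B (-(Ki * A)) (-(Ki * B)))ᵀ * Θi1 *
        Matrix.fromBlocks A B (-(Ki * A)) (-(Ki * B))) :
    Θi - Θi1 = (Matrix.fromBlocks A B (-(Ki * A)) (-(Ki * B)))ᵀ * (Θi - Θi1) *
        Matrix.fromBlocks A B (-(Ki * A)) (-(Ki * B)) +
      (Matrix.fromBlocks 0 0 ((Ki - Kim1) * A) ((Ki - Kim1) * B))ᵀ * Θi *
        Matrix.fromBlocks 0 0 ((Ki - Kim1) * A) ((Ki - Kim1) * B) :=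
  stmt8_general A B Kim1 Ki Q Θxx Θux Θuu huu Θi Θi1 hΘi hsymi hKi hlyapi hlyapi1
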